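/- arXiv:1902.01469 — 2 statements merged into one kernel-verified Lean document; each statement's English description precedes it below -/
import Mathlib

section
/- Let I be an ideal on a set X. Regard 𝒫(X) as a Boolean ring with addition the symmetric difference △ and multiplication the intersection; then I is an ideal of this ring, the connected components of the ballean C(X,I) are exactly the cosets Y + I = {Z ⊆ X : Y △ Z ∈ I} of I, and consequently the set of connected components of C(X,I) has the same cardinality as the quotient ring 𝒫(X)/I. Moreover, the number of connected components of exp(X_I) equals |𝒫(X)/I| + 1. -/
open Set Cardinal

universe u v

variable {X : Type*} {Y : Type*} {P : Type*} {Q : Type*}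

/-- The ball around a set: `B(A, r) = ⋃_{y ∈ A} B(y, r)`. -/
def ballSet (B : X → P → Set X) (A : Set X) (r : P) : Set X := ⋃ y ∈ A, B y r

/-- `B : X → P → Set X` is the ball structure of a ballean with support `X` and radii `P`. -/
def IsBalleanBall (B : X → P → Set X) : Prop :=
  Nonempty P ∧ (∀ x r, x ∈ B x r) ∧ (∀ x y r, x ∈ B y r ↔ y ∈ B x r) ∧
    (∀ r s, ∃ t, ∀ x, ballSet B (B x r) s ⊆ B x t)

/-- A map between balleans is coarse. -/
def IsCoarse (BX : X → P → Set X) (BY : Y → Q → Set Y) (f : X → Y) : Prop :=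
  ∀ r, ∃ s, ∀ x, f '' BX x r ⊆ BY (f x) s

/-- A map between balleans is effectively proper. -/
def IsEffectivelyProper (BX : X → P → Set X) (BY : Y → Q → Set Y) (f : X → Y) : Prop :=
  ∀ s, ∃ r, ∀ x, f ⁻¹' BY (f x) s ⊆ BX x r

/-- A coarse embedding is a map that is both coarse and effectively proper. -/
def IsCoarseEmbedding (BX : X → P → Set X) (BY : Y → Q → Set Y) (f : X → Y) : Prop :=
  IsCoarse BX BY f ∧ IsEffectivelyProper BX BY f

/-- An asymorphism is a bijective map that is both coarse and effectively proper. -/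
def IsAsymorphism (BX : X → P → Set X) (BY : Y → Q → Set Y) (f : X → Y) : Prop :=
  Function.Bijective f ∧ IsCoarse BX BY f ∧ IsEffectivelyProper BX BY f

/-- A subset of a ballean is bounded. -/
def IsBoundedSet (B : X → P → Set X) (A : Set X) : Prop :=
  A = ∅ ∨ ∃ r, ∀ y ∈ A, A ⊆ B y r

/-- A subset of a ballean is large. -/
def IsLargeSet (B : X → P → Set X) (A : Set X) : Prop :=
  ∃ r, ballSet B A r = Set.univ

/-- A subset of a ballean is thick. -/
def IsThickSet (B : X → P → Set X) (A : Set X) : Prop :=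
  ∀ r, ∃ x ∈ A, B x r ⊆ A

/-- A subset of a ballean is thin. -/
def IsThinSet (B : X → P → Set X) (A : Set X) : Prop :=
  ∀ r, ∃ V : Set X, IsBoundedSet B V ∧ ∀ x ∈ A \ V, B x r ∩ A = {x}

/-- A `{0,1}`-valued function on a ballean is slowly oscillating. -/
def IsSlowlyOscillating (B : X → P → Set X) (f : X → Bool) : Prop :=
  ∀ r, ∃ V : Set X, IsBoundedSet B V ∧ ∀ x, x ∉ V → ∀ y ∈ B x r, ∀ z ∈ B x r, f y = f z

/-- A ballean is connected. -/
def IsConnectedBall (B : X → P → Set X) : Prop := ∀ x y, ∃ r, y ∈ B x r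

/-- The connected component of a point of a ballean. -/
def balleanComponent (B : X → P → Set X) (x : X) : Set X := {y | ∃ r, y ∈ B x r}

/-- The ball structure of the hyperballean `exp B`. -/
def expBall (B : X → P → Set X) : Set X → P → Set (Set X) :=
  fun A r => {C | A ⊆ ballSet B C r ∧ C ⊆ ballSet B A r}

/-- The ball structure of the subballean on a subset `S`. -/
def subBall (B : X → P → Set X) (S : Set X) : S → P → Set S :=
  fun y r => {z | (z : X) ∈ B (y : X) r}

/-- An ideal on a set `X`: a family of subsets closed under subsets and finite unions,
containing all finite sets, and not containing `X` itself. -/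
def IsIdeal (I : Set (Set X)) : Prop :=
  (∀ A ∈ I, ∀ B ⊆ A, B ∈ I) ∧ (∀ A ∈ I, ∀ B ∈ I, A ∪ B ∈ I) ∧
    (∀ A : Set X, A.Finite → A ∈ I) ∧ Set.univ ∉ I

/-- The ball structure of the point ideal ballean `X_I`:
`B_I(x,A) = {x}` if `x ∉ A` and `B_I(x,A) = {x} ∪ A` if `x ∈ A`. -/
def pointIdealBall (I : Set (Set X)) : X → I → Set X :=
  fun x A => insert x {y | y ∈ (A : Set X) ∧ x ∈ (A : Set X)}

/-- The ball structure of the `I`-ary ballean `X_{I-ary}`: `B(x,A) = {x} ∪ A`. -/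
def aryBall (I : Set (Set X)) : X → I → Set X :=
  fun x A => insert x (A : Set X)

/-- The ball structure of the ballean `C(X,I)` on `𝒫(X)`: `B_C(Z,K) = {W | Z △ W ⊆ K}`. -/
def cBall (I : Set (Set X)) : Set X → I → Set (Set X) :=
  fun Z K => {W | symmDiff Z W ⊆ (K : Set X)}

/-- The support of the flat hyperballean `X^♭`: all nonempty bounded subsets. -/
def flatSupport (B : X → P → Set X) : Set (Set X) := {A | A.Nonempty ∧ IsBoundedSet B A}

section Stmt18Aux

variable {X : Type u} {I : Set (Set X)}

lemma stmt18_empty_mem (hI : IsIdeal I) : (∅ : Set X) ∈ I :=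
  hI.2.2.1 ∅ Set.finite_empty

lemma stmt18_comp_eq (hI : IsIdeal I) (Y : Set X) :
    balleanComponent (cBall I) Y = {Z : Set X | symmDiff Y Z ∈ I} := by
  ext Z
  constructor
  · rintro ⟨K, hK⟩
    exact hI.1 K K.2 _ hK
  · intro hZ
    refine ⟨⟨symmDiff Y Z, hZ⟩, ?_⟩
    show symmDiff Y Z ⊆ symmDiff Y Z
    exact subset_rfl

lemma stmt18_coset_eq (hI : IsIdeal I) {Y Y' : Set X} (h : symmDiff Y Y' ∈ I) :
    {Z : Set X | symmDiff Y Z ∈ I} = {Z : Set X | symmDiff Y' Z ∈ I} := by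
  have h' : symmDiff Y' Y ∈ I := by rwa [symmDiff_comm]
  ext Z
  constructor
  · intro hZ
    exact hI.1 _ (hI.2.1 _ h' _ hZ) _ (symmDiff_triangle Y' Y Z)
  · intro hZ
    exact hI.1 _ (hI.2.1 _ h _ hZ) _ (symmDiff_triangle Y Y' Z)

lemma stmt18_comp_eq_iff (hI : IsIdeal I) {Y Y' : Set X} :
    balleanComponent (cBall I) Y = balleanComponent (cBall I) Y' ↔ symmDiff Y Y' ∈ I := by
  rw [stmt18_comp_eq hI, stmt18_comp_eq hI]
  constructor
  · intro h
    have : Y' ∈ {Z : Set X | symmDiff Y' Z ∈ I} := by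
      simp only [Set.mem_setOf_eq, symmDiff_self, bot_eq_empty]
      exact stmt18_empty_mem hI
    rw [← h] at this
    exact this
  · exact stmt18_coset_eq hI

/-- The ideal `I` as an ideal of the Boolean ring `AsBoolRing (Set X)`. -/
def stmt18J (hI : IsIdeal I) : Ideal (AsBoolRing (Set X)) where
  carrier := {a | ofBoolRing a ∈ I}
  add_mem' := by
    intro a b ha hb
    simp only [Set.mem_setOf_eq, ofBoolRing_add] at *
    exact hI.1 _ (hI.2.1 _ ha _ hb) _ symmDiff_le_sup
  zero_mem' := by
    simp only [Set.mem_setOf_eq, ofBoolRing_zero, bot_eq_empty]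
    exact stmt18_empty_mem hI
  smul_mem' := by
    intro c a ha
    simp only [Set.mem_setOf_eq, smul_eq_mul, ofBoolRing_mul] at *
    exact hI.1 _ ha _ inf_le_right

lemma stmt18_mem_J (hI : IsIdeal I) (Y : Set X) : toBoolRing Y ∈ stmt18J hI ↔ Y ∈ I := by
  show ofBoolRing (toBoolRing Y) ∈ I ↔ Y ∈ I
  rw [ofBoolRing_toBoolRing]

lemma stmt18_mk_eq_mk (hI : IsIdeal I) {Y Y' : Set X} :
    Ideal.Quotient.mk (stmt18J hI) (toBoolRing Y) =
      Ideal.Quotient.mk (stmt18J hI) (toBoolRing Y') ↔ symmDiff Y Y' ∈ I := by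
  rw [Ideal.Quotient.eq]
  show ofBoolRing (toBoolRing Y - toBoolRing Y') ∈ I ↔ _
  rw [ofBoolRing_sub, ofBoolRing_toBoolRing, ofBoolRing_toBoolRing]

-- basic facts about ballSet of the point ideal ballean
lemma stmt18_subset_ballSet (B : X → P → Set X) (hB : ∀ x r, x ∈ B x r)
    (A : Set X) (r : P) : A ⊆ ballSet B A r := by
  intro x hx
  exact Set.mem_biUnion hx (hB x r)

lemma stmt18_ballSet_pib_subset (I : Set (Set X)) (A : Set X) (K : I) :
    ballSet (pointIdealBall I) A K ⊆ A ∪ (K : Set X) := by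
  intro z hz
  obtain ⟨y, hy, hz⟩ := Set.mem_iUnion₂.1 hz
  rcases hz with rfl | hz
  · exact Or.inl hy
  · exact Or.inr hz.1

lemma stmt18_ballSet_pib_empty (I : Set (Set X)) (K : I) :
    ballSet (pointIdealBall I) (∅ : Set X) K = ∅ := by
  simp [ballSet]

lemma stmt18_K_subset_ballSet (I : Set (Set X)) {A : Set X} {K : I} {c : X}
    (hcA : c ∈ A) (hcK : c ∈ (K : Set X)) :
    (K : Set X) ⊆ ballSet (pointIdealBall I) A K := by
  intro z hz
  exact Set.mem_biUnion hcA (Or.inr ⟨hz, hcK⟩)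

lemma stmt18_pib_refl (I : Set (Set X)) (x : X) (K : I) : x ∈ pointIdealBall I x K :=
  Or.inl rfl

lemma stmt18_compE_self (hI : IsIdeal I) (A : Set X) :
    A ∈ balleanComponent (expBall (pointIdealBall I)) A := by
  refine ⟨⟨∅, stmt18_empty_mem hI⟩, ?_, ?_⟩ <;>
    exact stmt18_subset_ballSet _ (stmt18_pib_refl I) A _

lemma stmt18_compE_empty (hI : IsIdeal I) :
    balleanComponent (expBall (pointIdealBall I)) (∅ : Set X) = {(∅ : Set X)} := by
  ext C
  constructor
  · rintro ⟨K, _, h2⟩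
    rw [stmt18_ballSet_pib_empty I K] at h2
    simpa using Set.subset_empty_iff.1 h2
  · rintro rfl
    exact stmt18_compE_self hI ∅

lemma stmt18_compE_nonempty (hI : IsIdeal I) {A : Set X} (hA : A.Nonempty) :
    balleanComponent (expBall (pointIdealBall I)) A =
      {C : Set X | C.Nonempty ∧ symmDiff A C ∈ I} := by
  ext C
  constructor
  · rintro ⟨K, h1, h2⟩
    have hCne : C.Nonempty := by
      rcases Set.eq_empty_or_nonempty C with rfl | h
      · rw [stmt18_ballSet_pib_empty I K] at h1
        exact absurd (Set.subset_empty_iff.1 h1) (Set.nonempty_iff_ne_empty.1 hA)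
      · exact h
    refine ⟨hCne, hI.1 K K.2 _ ?_⟩
    intro z hz
    rcases hz with ⟨hzA, hzC⟩ | ⟨hzC, hzA⟩
    · rcases stmt18_ballSet_pib_subset I C K (h1 hzA) with h | h
      · exact absurd h hzC
      · exact h
    · rcases stmt18_ballSet_pib_subset I A K (h2 hzC) with h | h
      · exact absurd h hzA
      · exact h
  · rintro ⟨⟨c, hc⟩, hAC⟩
    obtain ⟨a, ha⟩ := hA
    have hK : symmDiff A C ∪ ({a} ∪ {c}) ∈ I :=
      hI.2.1 _ hAC _ (hI.2.2.1 _ (Set.Finite.union (Set.finite_singleton a)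
        (Set.finite_singleton c)))
    refine ⟨⟨_, hK⟩, ?_, ?_⟩
    · -- A ⊆ ballSet (pointIdealBall I) C K
      intro x hx
      by_cases hxC : x ∈ C
      · exact stmt18_subset_ballSet _ (stmt18_pib_refl I) C _ hxC
      · refine stmt18_K_subset_ballSet I hc ?_ ?_
        · exact Or.inr (Or.inr rfl)
        · exact Or.inl (Or.inl ⟨hx, hxC⟩)
    · -- C ⊆ ballSet (pointIdealBall I) A K
      intro x hx
      by_cases hxA : x ∈ A
      · exact stmt18_subset_ballSet _ (stmt18_pib_refl I) A _ hxA
      · refine stmt18_K_subset_ballSet I ha ?_ ?_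
        · exact Or.inr (Or.inl rfl)
        · exact Or.inl (Or.inr ⟨hx, hxA⟩)

lemma stmt18_compE_congr (hI : IsIdeal I) {A A' : Set X} (hA : A.Nonempty) (hA' : A'.Nonempty)
    (h : symmDiff A A' ∈ I) :
    balleanComponent (expBall (pointIdealBall I)) A =
      balleanComponent (expBall (pointIdealBall I)) A' := by
  rw [stmt18_compE_nonempty hI hA, stmt18_compE_nonempty hI hA']
  have hco := stmt18_coset_eq hI h
  ext C
  simp only [Set.mem_setOf_eq]
  exact and_congr_right fun _ => Set.ext_iff.1 hco C

end Stmt18Aux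
/-- Regard `𝒫(X)` as a Boolean ring (`AsBoolRing (Set X)`, with addition the symmetric
difference and multiplication the intersection). For an ideal `I` on `X`: `I` is an ideal
`J` of this ring; the connected components of `C(X,I)` are exactly the cosets
`{Z | Y △ Z ∈ I}` of `I`; the set of connected components of `C(X,I)` has the cardinality of
the quotient ring `𝒫(X)/I`; and the number of connected components of `exp(X_I)` is
`|𝒫(X)/I| + 1`. -/
theorem stmt18 {X : Type u} (I : Set (Set X)) (hI : IsIdeal I) :
    ∃ J : Ideal (AsBoolRing (Set X)),
      (∀ Y : Set X, toBoolRing Y ∈ J ↔ Y ∈ I) ∧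
      (∀ Y : Set X, balleanComponent (cBall I) Y = {Z : Set X | symmDiff Y Z ∈ I}) ∧
      Cardinal.mk {S : Set (Set X) // ∃ Y : Set X, S = balleanComponent (cBall I) Y} =
        Cardinal.mk (AsBoolRing (Set X) ⧸ J) ∧
      Cardinal.mk {S : Set (Set X) // ∃ A : Set X,
          S = balleanComponent (expBall (pointIdealBall I)) A} =
        Cardinal.mk (AsBoolRing (Set X) ⧸ J) + 1 := by
  classical
  refine ⟨stmt18J hI, stmt18_mem_J hI, stmt18_comp_eq hI, ?_, ?_⟩
  · -- components of C(X,I) ↔ quotient ring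
    refine Cardinal.mk_congr (Equiv.ofBijective
      (fun s => Ideal.Quotient.mk (stmt18J hI) (toBoolRing s.2.choose)) ⟨?_, ?_⟩)
    · intro s t h
      have hs := s.2.choose_spec
      have ht := t.2.choose_spec
      have h1 : symmDiff s.2.choose t.2.choose ∈ I := (stmt18_mk_eq_mk hI).1 h
      have h2 := (stmt18_comp_eq_iff hI).2 h1
      exact Subtype.ext (by rw [hs, ht, h2])
    · intro q
      obtain ⟨a, rfl⟩ := Ideal.Quotient.mk_surjective q
      refine ⟨⟨balleanComponent (cBall I) (ofBoolRing a), ofBoolRing a, rfl⟩, ?_⟩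
      set s : {S : Set (Set X) // ∃ Y : Set X, S = balleanComponent (cBall I) Y} :=
        ⟨balleanComponent (cBall I) (ofBoolRing a), ofBoolRing a, rfl⟩ with hsdef
      have hs : balleanComponent (cBall I) (ofBoolRing a)
          = balleanComponent (cBall I) s.2.choose := s.2.choose_spec
      have h1 : symmDiff s.2.choose (ofBoolRing a) ∈ I := by
        rw [symmDiff_comm]
        exact (stmt18_comp_eq_iff hI).1 hs
      have := (stmt18_mk_eq_mk hI).2 h1
      rwa [toBoolRing_ofBoolRing] at this
  · -- components of exp(X_I) ↔ quotient ring + 1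
    have hXne : Nonempty X := by
      rcases isEmpty_or_nonempty X with h | h
      · exact absurd (hI.2.2.1 Set.univ (Set.toFinite _)) hI.2.2.2
      · exact h
    have hg_bij : Function.Bijective
        (fun s : {S : Set (Set X) // ∃ A : Set X,
            S = balleanComponent (expBall (pointIdealBall I)) A} =>
          if h : s.2.choose = ∅ then (none : Option (AsBoolRing (Set X) ⧸ stmt18J hI))
          else some (Ideal.Quotient.mk (stmt18J hI) (toBoolRing s.2.choose))) := by
      constructor
      · intro s t h
        dsimp only at h
        by_cases hs : s.2.choose = ∅ <;> by_cases ht : t.2.choose = ∅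
        · exact Subtype.ext (by rw [s.2.choose_spec, t.2.choose_spec, hs, ht])
        · rw [dif_pos hs, dif_neg ht] at h
          exact absurd h (by simp)
        · rw [dif_neg hs, dif_pos ht] at h
          exact absurd h (by simp)
        · rw [dif_neg hs, dif_neg ht, Option.some.injEq] at h
          refine Subtype.ext ?_
          rw [s.2.choose_spec, t.2.choose_spec]
          exact stmt18_compE_congr hI (Set.nonempty_iff_ne_empty.2 hs)
            (Set.nonempty_iff_ne_empty.2 ht) ((stmt18_mk_eq_mk hI).1 h)
      · rintro (_ | q)
        · refine ⟨⟨balleanComponent (expBall (pointIdealBall I)) ∅, ∅, rfl⟩, ?_⟩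
          set s : {S : Set (Set X) // ∃ A : Set X,
              S = balleanComponent (expBall (pointIdealBall I)) A} :=
            ⟨balleanComponent (expBall (pointIdealBall I)) ∅, ∅, rfl⟩ with hsdef
          have h1 : balleanComponent (expBall (pointIdealBall I)) s.2.choose
              = {(∅ : Set X)} := s.2.choose_spec.symm.trans (stmt18_compE_empty hI)
          have h2 : s.2.choose ∈ ({(∅ : Set X)} : Set (Set X)) :=
            (Set.ext_iff.1 h1 s.2.choose).1 (stmt18_compE_self hI _)
          have hch : s.2.choose = ∅ := h2
          show (if h : s.2.choose = ∅ then (none : Option (AsBoolRing (Set X) ⧸ stmt18J hI))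
            else some (Ideal.Quotient.mk (stmt18J hI) (toBoolRing s.2.choose))) = none
          rw [dif_pos hch]
        · obtain ⟨a, rfl⟩ := Ideal.Quotient.mk_surjective q
          obtain ⟨Z, hZne, hYZ⟩ : ∃ Z : Set X, Z.Nonempty ∧ symmDiff (ofBoolRing a) Z ∈ I := by
            by_cases hY : (ofBoolRing a : Set X) = ∅
            · refine ⟨{hXne.some}, Set.singleton_nonempty _, ?_⟩
              rw [hY, ← Set.bot_eq_empty, bot_symmDiff]
              exact hI.2.2.1 _ (Set.finite_singleton hXne.some)
            · refine ⟨ofBoolRing a, Set.nonempty_iff_ne_empty.2 hY, ?_⟩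
              rw [symmDiff_self, Set.bot_eq_empty]
              exact stmt18_empty_mem hI
          refine ⟨⟨balleanComponent (expBall (pointIdealBall I)) Z, Z, rfl⟩, ?_⟩
          set s : {S : Set (Set X) // ∃ A : Set X,
              S = balleanComponent (expBall (pointIdealBall I)) A} :=
            ⟨balleanComponent (expBall (pointIdealBall I)) Z, Z, rfl⟩ with hsdef
          have h1 : balleanComponent (expBall (pointIdealBall I)) Z
              = balleanComponent (expBall (pointIdealBall I)) s.2.choose := s.2.choose_spec
          have hmem : s.2.choose ∈ balleanComponent (expBall (pointIdealBall I)) Z :=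
            (Set.ext_iff.1 h1 s.2.choose).2 (stmt18_compE_self hI _)
          have hmem2 : s.2.choose ∈ {C : Set X | C.Nonempty ∧ symmDiff Z C ∈ I} :=
            (Set.ext_iff.1 (stmt18_compE_nonempty hI hZne) s.2.choose).1 hmem
          have hch : s.2.choose ≠ ∅ := Set.nonempty_iff_ne_empty.1 hmem2.1
          have hYA : symmDiff (ofBoolRing a) s.2.choose ∈ I :=
            hI.1 _ (hI.2.1 _ hYZ _ hmem2.2) _ (symmDiff_triangle _ Z _)
          have hmk := (stmt18_mk_eq_mk hI).2 hYA
          rw [toBoolRing_ofBoolRing] at hmk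
          show (if h : s.2.choose = ∅ then (none : Option (AsBoolRing (Set X) ⧸ stmt18J hI))
            else some (Ideal.Quotient.mk (stmt18J hI) (toBoolRing s.2.choose)))
            = some (Ideal.Quotient.mk (stmt18J hI) a)
          rw [dif_neg hch, Option.some.injEq]
          exact hmk.symm
    rw [← Cardinal.mk_option]
    exact Cardinal.mk_congr (Equiv.ofBijective _ hg_bij)
end

section
/- Let X be a countably infinite set and I an ideal on X, and let I^∧ = {u : u is an ultrafilter on X such that A ∉ u for every A ∈ I}. If I^∧ is infinite, then the quotient ring 𝒫(X)/I has cardinality 2^{ℵ0}; equivalently, the ballean C(X,I) has exactly continuum many connected components. -/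
open Set Cardinal symmDiff

universe u v

variable {X : Type*} {Y : Type*} {P : Type*} {Q : Type*}

/-- From infinitely many ultrafilters avoiding `I`, get a sequence of pairwise disjoint
sets not in `I`. -/
theorem exists_disjoint_seq {X : Type u} (I : Set (Set X))
    (hwedge : {u : Ultrafilter X | ∀ A ∈ I, A ∉ u}.Infinite) :
    ∃ A : ℕ → Set X, (∀ n, A n ∉ I) ∧ Pairwise (Function.onFun Disjoint A) := by
  set U : Set (Ultrafilter X) := {u : Ultrafilter X | ∀ A ∈ I, A ∉ u} with hU
  set P : Set X → Prop := fun D => {u | u ∈ U ∧ D ∈ u}.Infinite with hPdef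
  have hP0 : P Set.univ := by
    refine hwedge.mono ?_
    intro u hu
    exact ⟨hu, Filter.univ_mem⟩
  have step : ∀ p : {D : Set X // P D}, ∃ AD : Set X × Set X,
      P AD.2 ∧ AD.1 ∉ I ∧ AD.1 ⊆ p.1 ∧ AD.2 ⊆ p.1 ∧ Disjoint AD.1 AD.2 := by
    rintro ⟨D, hD⟩
    obtain ⟨u, hu, v, hv, huv⟩ := hD.nontrivial
    obtain ⟨C, hCu, hCv⟩ : ∃ C : Set X, C ∈ u ∧ C ∉ v := by
      by_contra h
      push_neg at h
      exact huv (Ultrafilter.coe_le_coe.mp (fun s hs => h s hs)).symm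
    have hCcv : Cᶜ ∈ v := Ultrafilter.compl_mem_iff_notMem.mpr hCv
    have hsplit : {w | w ∈ U ∧ D ∩ C ∈ w}.Infinite ∨ {w | w ∈ U ∧ D ∩ Cᶜ ∈ w}.Infinite := by
      rw [← Set.infinite_union]
      refine hD.mono ?_
      intro w hw
      rcases Ultrafilter.mem_or_compl_mem w C with h | h
      · exact Or.inl ⟨hw.1, Filter.inter_mem hw.2 h⟩
      · exact Or.inr ⟨hw.1, Filter.inter_mem hw.2 h⟩
    rcases hsplit with h | h
    · refine ⟨(D ∩ Cᶜ, D ∩ C), h, ?_, Set.inter_subset_left, Set.inter_subset_left, ?_⟩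
      · intro hmem
        exact hv.1 _ hmem (Filter.inter_mem hv.2 hCcv)
      · exact Set.disjoint_of_subset Set.inter_subset_right Set.inter_subset_right
          (disjoint_compl_left)
    · refine ⟨(D ∩ C, D ∩ Cᶜ), h, ?_, Set.inter_subset_left, Set.inter_subset_left, ?_⟩
      · intro hmem
        exact hu.1 _ hmem (Filter.inter_mem hu.2 hCu)
      · exact Set.disjoint_of_subset Set.inter_subset_right Set.inter_subset_right
          (disjoint_compl_right)
  choose g h1 h2 h3 h4 h5 using step
  let D : ℕ → {D : Set X // P D} := fun n =>
    Nat.rec ⟨Set.univ, hP0⟩ (fun _ p => ⟨(g p).2, h1 p⟩) n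
  have hDsucc : ∀ n, (D (n + 1)).1 = (g (D n)).2 := fun n => rfl
  refine ⟨fun n => (g (D n)).1, fun n => h2 (D n), ?_⟩
  have hanti : Antitone fun n => (D n).1 := by
    refine antitone_nat_of_succ_le ?_
    intro n
    rw [hDsucc]
    exact h4 (D n)
  have key : ∀ m n, m < n → Disjoint (g (D m)).1 (g (D n)).1 := by
    intro m n hmn
    have h1' : (g (D n)).1 ⊆ (D (m + 1)).1 := (h3 (D n)).trans (hanti hmn)
    have h2' : Disjoint (g (D m)).1 (D (m + 1)).1 := by
      rw [hDsucc]; exact h5 (D m)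
    exact h2'.mono_right h1'
  intro m n hmn
  rcases lt_or_gt_of_ne hmn with h | h
  · exact key m n h
  · exact (key n m h).symm

theorem union_symmDiff_notMem {X : Type u} (I : Set (Set X)) (hI : IsIdeal I)
    (A : X → Set X) (hA : ∀ x, A x ∉ I) (hdisj : Pairwise (Function.onFun Disjoint A))
    {S T : Set X} (hST : S ≠ T) :
    (⋃ x ∈ S, A x) ∆ (⋃ x ∈ T, A x) ∉ I := by
  -- a point in the symmetric difference of the index sets
  have hsub : ∀ S T : Set X, ∀ x, x ∈ S → x ∉ T →
      A x ⊆ (⋃ y ∈ S, A y) \ (⋃ y ∈ T, A y) := by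
    intro S T x hxS hxT a ha
    refine ⟨Set.mem_biUnion hxS ha, ?_⟩
    intro hmem
    obtain ⟨y, hyT, hay⟩ := Set.mem_iUnion₂.mp hmem
    have hxy : x ≠ y := fun h => hxT (h ▸ hyT)
    exact Set.disjoint_left.mp (hdisj hxy) ha hay
  have hx : ∃ x, (x ∈ S ∧ x ∉ T) ∨ (x ∈ T ∧ x ∉ S) := by
    by_contra h
    push_neg at h
    exact hST (Set.ext fun x => ⟨fun hx => (h x).1 hx, fun hx => (h x).2 hx⟩)
  obtain ⟨x, hx⟩ := hx
  intro hmem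
  rcases hx with ⟨h1', h2'⟩ | ⟨h1', h2'⟩
  · refine hA x (hI.1 _ hmem _ ?_)
    exact (hsub S T x h1' h2').trans (fun a ha => Set.mem_symmDiff.mpr (Or.inl ⟨ha.1, ha.2⟩))
  · refine hA x (hI.1 _ hmem _ ?_)
    exact (hsub T S x h1' h2').trans (fun a ha => Set.mem_symmDiff.mpr (Or.inr ⟨ha.1, ha.2⟩))

/-- Let `X` be a countably infinite set, `I` an ideal on `X`, and
`I^∧ = {u : ultrafilter on X | ∀ A ∈ I, A ∉ u}`. If `I^∧` is infinite, then the quotient of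
the Boolean ring `𝒫(X)` by (the ring ideal corresponding to) `I` has cardinality `2^ℵ₀`;
equivalently, the ballean `C(X,I)` has exactly continuum many connected components. -/
theorem stmt19 {X : Type u} [Countable X] [Infinite X] (I : Set (Set X)) (hI : IsIdeal I)
    (hwedge : {u : Ultrafilter X | ∀ A ∈ I, A ∉ u}.Infinite) :
    (∀ J : Ideal (AsBoolRing (Set X)), (∀ Y : Set X, toBoolRing Y ∈ J ↔ Y ∈ I) →
      Cardinal.mk (AsBoolRing (Set X) ⧸ J) = 2 ^ Cardinal.aleph0) ∧
    Cardinal.mk {S : Set (Set X) // ∃ Y : Set X, S = balleanComponent (cBall I) Y} =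
      2 ^ Cardinal.aleph0 := by
  obtain ⟨d⟩ := nonempty_denumerable X
  have e : X ≃ ℕ := Denumerable.eqv X
  obtain ⟨A0, hA0, hdisj0⟩ := exists_disjoint_seq I hwedge
  set A : X → Set X := fun x => A0 (e x) with hAdef
  have hA : ∀ x, A x ∉ I := fun x => hA0 _
  have hdisj : Pairwise (Function.onFun Disjoint A) :=
    fun x y hxy => hdisj0 (fun h => hxy (e.injective h))
  set f : Set X → Set X := fun S => ⋃ x ∈ S, A x with hfdef
  have hf : ∀ S T : Set X, S ≠ T → f S ∆ f T ∉ I :=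
    fun S T h => union_symmDiff_notMem I hI A hA hdisj h
  have hmkX : #X = ℵ₀ := Cardinal.mk_eq_aleph0 X
  have hmkSet : #(Set X) = 2 ^ (Cardinal.aleph0 : Cardinal.{u}) := by
    rw [Cardinal.mk_set, hmkX]
  constructor
  · intro J hJ
    have key : ∀ Y Z : Set X, (Ideal.Quotient.mk J) (toBoolRing Y) =
        (Ideal.Quotient.mk J) (toBoolRing Z) ↔ Y ∆ Z ∈ I := by
      intro Y Z
      rw [Ideal.Quotient.eq, BooleanRing.sub_eq_add, ← toBoolRing_symmDiff, hJ]
    have hsurj : Function.Surjective (fun Y : Set X => (Ideal.Quotient.mk J) (toBoolRing Y)) := by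
      intro z
      obtain ⟨a, ha⟩ := Ideal.Quotient.mk_surjective z
      exact ⟨ofBoolRing a, ha⟩
    have hinj : Function.Injective (fun S : Set X => (Ideal.Quotient.mk J) (toBoolRing (f S))) := by
      intro S T h
      by_contra hne
      exact hf S T hne ((key (f S) (f T)).mp h)
    refine le_antisymm ?_ ?_
    · rw [← hmkSet]; exact Cardinal.mk_le_of_surjective hsurj
    · rw [← hmkSet]; exact Cardinal.mk_le_of_injective hinj
  · have memComp : ∀ Y Z : Set X, Z ∈ balleanComponent (cBall I) Y ↔ Y ∆ Z ∈ I := by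
      intro Y Z
      constructor
      · rintro ⟨K, hK⟩
        exact hI.1 _ K.2 _ hK
      · intro h
        exact ⟨⟨Y ∆ Z, h⟩, Set.Subset.refl _⟩
    have hempty : (∅ : Set X) ∈ I := hI.2.2.1 ∅ Set.finite_empty
    have compEq : ∀ Y Z : Set X,
        balleanComponent (cBall I) Y = balleanComponent (cBall I) Z ↔ Y ∆ Z ∈ I := by
      intro Y Z
      constructor
      · intro h
        have hZ : Z ∈ balleanComponent (cBall I) Z := by
          rw [memComp, symmDiff_self]
          exact hempty
        rw [← h] at hZ
        exact (memComp Y Z).mp hZ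
      · intro h
        ext W
        rw [memComp, memComp]
        constructor
        · intro hW
          refine hI.1 _ (hI.2.1 _ ((symmDiff_comm Y Z) ▸ h) _ hW) _ ?_
          exact symmDiff_triangle Z Y W
        · intro hW
          refine hI.1 _ (hI.2.1 _ h _ hW) _ ?_
          exact symmDiff_triangle Y Z W
    set comp : Set X → {S : Set (Set X) // ∃ Y : Set X, S = balleanComponent (cBall I) Y} :=
      fun Y => ⟨balleanComponent (cBall I) Y, Y, rfl⟩ with hcomp
    have hsurj : Function.Surjective comp := by
      rintro ⟨S, Y, rfl⟩
      exact ⟨Y, rfl⟩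
    have hinj : Function.Injective (fun S : Set X => comp (f S)) := by
      intro S T h
      by_contra hne
      exact hf S T hne ((compEq (f S) (f T)).mp (congrArg Subtype.val h))
    refine le_antisymm ?_ ?_
    · rw [← hmkSet]; exact Cardinal.mk_le_of_surjective hsurj
    · rw [← hmkSet]; exact Cardinal.mk_le_of_injective hinj
end
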